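/- Let {B_n} satisfy both a three-term recurrence B_{n+2} = (x − β_{n+1})B_{n+1} − γ_{n+1}B_n (monic, B_0=1, B_1 = x−β_0) and the differential-recursive relation −B_{n+1} − (ζ_n + α²)B_n − Σ_{ν<n} a_{n,ν} B_ν = ((1/x)A·x + 2α(d/dx)·x)B_n. Then ζ_n = β_n − (α+n+1)² for all n ≥ 0. -/

import Mathlib

open Polynomial Finset

/-- The differential operator `A f = x² f'' + x f' − x f` on polynomials. -/
noncomputable def opA (f : Polynomial ℂ) : Polynomial ℂ :=
  X ^ 2 * derivative (derivative f) + X * derivative f - X * f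

/-- The operator `(1/x)·A·x + 2α·(d/dx)·x` on polynomials. -/
noncomputable def opKL (α : ℂ) (f : Polynomial ℂ) : Polynomial ℂ :=
  (opA (X * f)).divX + C (2 * α) * derivative (X * f)

/-!
Both sides of the differential-recursive relation are compared in the coefficient of `x^n`.
The three-term recurrence makes `B_n` monic of degree `n`, with the coefficient of `x^n` in
`B_{n+1}` equal to that of `x^{n-1}` in `B_n` minus `β_n`; the lower `B_ν` contribute nothing.
The operator `(1/x)A x + 2α (d/dx) x` sends `x^n` to `((n+1)² + 2α(n+1)) x^n − x^{n+1}`, so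
the `x^n`-coefficients give `β_n − ζ_n − α² = (n+1)² + 2α(n+1)`.
-/

namespace Polynomial

variable {R : Type*}

lemma coeff_X_mul_derivative [CommSemiring R] (p : R[X]) (n : ℕ) :
    (X * derivative p).coeff n = n * p.coeff n := by
  cases n with
  | zero => simp
  | succ m => rw [coeff_X_mul, coeff_derivative]; push_cast; ring

lemma coeff_X_sq_mul_derivative_derivative [CommRing R] (p : R[X]) (n : ℕ) :
    (X ^ 2 * derivative (derivative p)).coeff n = n * (n - 1) * p.coeff n := by
  match n with
  | 0 => simp
  | 1 => simp [sq, mul_assoc, coeff_X_mul]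
  | m + 2 =>
    rw [coeff_X_pow_mul, coeff_derivative, coeff_derivative]
    push_cast; ring

section ThreeTermRecurrence

variable [CommRing R] {B : ℕ → R[X]} {β γ : ℕ → R}

lemma natDegree_le_and_coeff_self_of_threeTerm (hB0 : B 0 = 1) (hB1 : B 1 = X - C (β 0))
    (hrec : ∀ n, B (n + 2) = (X - C (β (n + 1))) * B (n + 1) - C (γ (n + 1)) * B n) (n : ℕ) :
    (B n).natDegree ≤ n ∧ (B n).coeff n = 1 := by
  suffices h : ∀ n, ((B n).natDegree ≤ n ∧ (B n).coeff n = 1) ∧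
      ((B (n + 1)).natDegree ≤ n + 1 ∧ (B (n + 1)).coeff (n + 1) = 1) from (h n).1
  intro n
  induction n with
  | zero => simp [hB0, hB1, natDegree_X_le]
  | succ n ih =>
    obtain ⟨⟨hdeg, hcoeff⟩, hdeg', hcoeff'⟩ := ih
    refine ⟨⟨hdeg', hcoeff'⟩, ?_, ?_⟩
    · have hmul : ((X - C (β (n + 1))) * B (n + 1)).natDegree ≤ n + 2 :=
        (natDegree_mul_le_of_le (natDegree_X_sub_C_le _) hdeg').trans (by omega)
      have hC : (C (γ (n + 1)) * B n).natDegree ≤ n + 2 := (natDegree_C_mul_le _ _).trans (by omega)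
      rw [hrec]
      exact (natDegree_sub_le _ _).trans (max_le hmul hC)
    · have hB' : (B (n + 1)).coeff (n + 2) = 0 := coeff_eq_zero_of_natDegree_lt (by omega)
      have hB : (B n).coeff (n + 2) = 0 := coeff_eq_zero_of_natDegree_lt (by omega)
      rw [hrec, sub_mul, coeff_sub, coeff_sub, coeff_X_mul, coeff_C_mul, coeff_C_mul, hcoeff',
        hB', hB]
      simp

lemma coeff_succ_self_of_threeTerm (hB0 : B 0 = 1) (hB1 : B 1 = X - C (β 0))
    (hrec : ∀ n, B (n + 2) = (X - C (β (n + 1))) * B (n + 1) - C (γ (n + 1)) * B n) (n : ℕ) :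
    (B (n + 1)).coeff n = (X * B n).coeff n - β n := by
  cases n with
  | zero => simp [hB0, hB1]
  | succ n =>
    have hdeg := (natDegree_le_and_coeff_self_of_threeTerm hB0 hB1 hrec n).1
    have hcoeff := (natDegree_le_and_coeff_self_of_threeTerm hB0 hB1 hrec (n + 1)).2
    rw [hrec, sub_mul, coeff_sub, coeff_sub, coeff_C_mul, coeff_C_mul, hcoeff,
      coeff_eq_zero_of_natDegree_lt (p := B n) (by omega)]
    ring

end ThreeTermRecurrence

end Polynomial

lemma coeff_opA (g : ℂ[X]) (m : ℕ) : (opA g).coeff m = m ^ 2 * g.coeff m - (X * g).coeff m := by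
  simp only [opA, coeff_add, coeff_sub, coeff_X_sq_mul_derivative_derivative,
    coeff_X_mul_derivative]
  ring

lemma coeff_opKL (α : ℂ) (f : ℂ[X]) (n : ℕ) :
    (opKL α f).coeff n
      = (((n : ℂ) + 1) ^ 2 + 2 * α * ((n : ℂ) + 1)) * f.coeff n - (X * f).coeff n := by
  rw [opKL, coeff_add, coeff_divX, coeff_opA, coeff_C_mul, coeff_derivative, coeff_X_mul,
    coeff_X_mul]
  push_cast
  ring

theorem zeta_eq_beta_sub_sq_general (α : ℂ) (B : ℕ → Polynomial ℂ)
    (β γ ζ : ℕ → ℂ) (a : ℕ → ℕ → ℂ)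
    (hB0 : B 0 = 1) (hB1 : B 1 = X - C (β 0))
    (hrec : ∀ n, B (n + 2) = (X - C (β (n + 1))) * B (n + 1) - C (γ (n + 1)) * B n)
    (hrel : ∀ n, -(B (n + 1)) - C (ζ n + α ^ 2) * B n
      - ∑ ν ∈ Finset.range n, C (a n ν) * B ν = opKL α (B n)) :
    ∀ n, ζ n = β n - (α + n + 1) ^ 2 := by
  intro n
  have hlead := (natDegree_le_and_coeff_self_of_threeTerm hB0 hB1 hrec n).2
  have hlower : ∀ ν ∈ range n, (B ν).coeff n = 0 := fun ν hν =>
    coeff_eq_zero_of_natDegree_lt <|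
      (natDegree_le_and_coeff_self_of_threeTerm hB0 hB1 hrec ν).1.trans_lt (mem_range.mp hν)
  have h := congrArg (coeff · n) (hrel n)
  simp only [coeff_sub, coeff_neg, coeff_C_mul, finsetSum_coeff, coeff_opKL, hlead,
    coeff_succ_self_of_threeTerm hB0 hB1 hrec n] at h
  rw [sum_eq_zero fun ν hν => by rw [hlower ν hν, mul_zero]] at h
  linear_combination -h

/-- If `{B_n}` satisfies both a three-term recurrence (monic orthogonality) and the
differential-recursive relation coming from the `KL_α`-transform, then
`ζ_n = β_n − (α+n+1)²`. -/
theorem zeta_eq_beta_sub_sq (α : ℂ) (B : ℕ → Polynomial ℂ)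
    (β γ ζ : ℕ → ℂ) (a : ℕ → ℕ → ℂ)
    (hγ : ∀ n, γ (n + 1) ≠ 0)
    (hB0 : B 0 = 1) (hB1 : B 1 = X - C (β 0))
    (hrec : ∀ n, B (n + 2) = (X - C (β (n + 1))) * B (n + 1) - C (γ (n + 1)) * B n)
    (hrel : ∀ n, -(B (n + 1)) - C (ζ n + α ^ 2) * B n
      - ∑ ν ∈ Finset.range n, C (a n ν) * B ν = opKL α (B n)) :
    ∀ n, ζ n = β n - (α + n + 1) ^ 2 :=
  zeta_eq_beta_sub_sq_general α B β γ ζ a hB0 hB1 hrec hrel
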